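/- Let V ∈ ℝ^{N₂×r} have orthonormal columns with coherence γ(V) = √N₂ · max_{i,j}|V(i,j)|, and let S₁ ∈ ℝ^{N₂×m₁} be a column-sampling matrix whose columns are distinct standard basis vectors of ℝ^{N₂}. Suppose all singular values σ of S₁ᵀV satisfy m₁/(2N₂) ≤ σ² ≤ 3m₁/(2N₂). Then the orthogonal projection P onto the column space of S₁ᵀV satisfies max_{1≤i≤m₁} ‖P eᵢ‖₂² ≤ 6γ(V)²·r/m₁. -/

import Mathlib

open Matrix
open scoped BigOperators

lemma quad_lower_aux {r : ℕ} {M : Matrix (Fin r) (Fin r) ℝ} (hM : M.IsHermitian)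
    (c : ℝ) (hc : ∀ i, c ≤ hM.eigenvalues i) (y : Fin r → ℝ) :
    c * (y ⬝ᵥ y) ≤ y ⬝ᵥ (M *ᵥ y) := by
  set U : Matrix (Fin r) (Fin r) ℝ := (hM.eigenvectorUnitary : Matrix (Fin r) (Fin r) ℝ) with hU
  have hUU : U * star U = 1 := (Matrix.mem_unitaryGroup_iff).mp hM.eigenvectorUnitary.2
  have hsU : star U = Uᵀ := by
    rw [Matrix.star_eq_conjTranspose, conjTranspose_eq_transpose_of_trivial]
  set z : Fin r → ℝ := Uᵀ *ᵥ y with hz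
  have h1 : y ⬝ᵥ (M *ᵥ y) = ∑ i, hM.eigenvalues i * (z i)^2 := by
    conv_lhs => rw [hM.spectral_theorem, Unitary.conjStarAlgAut_apply, ← hU, hsU]
    rw [← mulVec_mulVec, ← mulVec_mulVec, dotProduct_mulVec, ← mulVec_transpose]
    simp only [← hz, dotProduct, mulVec_diagonal]
    exact Finset.sum_congr rfl fun i _ => by simp [pow_two]; ring
  have h2 : y ⬝ᵥ y = ∑ i, (z i)^2 := by
    have hzz : z ⬝ᵥ z = y ⬝ᵥ y := by
      rw [hz, dotProduct_mulVec, vecMul_transpose, mulVec_mulVec, ← hsU, hUU, one_mulVec]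
    rw [← hzz]
    simp [dotProduct, pow_two]
  rw [h1, h2, Finset.mul_sum]
  exact Finset.sum_le_sum fun i _ => mul_le_mul_of_nonneg_right (hc i) (sq_nonneg _)

/-- Coherence bound on the projection onto the column space of sampled rows of `V`.
If `S₁` selects `m₁` distinct rows of `V` (its columns are distinct standard basis vectors)
and all singular values `σ` of `S₁ᵀV` satisfy `m₁/(2N₂) ≤ σ² ≤ 3m₁/(2N₂)`, then the
orthogonal projection `P = S₁ᵀV (VᵀS₁S₁ᵀV)⁻¹ VᵀS₁` satisfies
`‖P eᵢ‖₂² ≤ 6 γ(V)² r / m₁` for every `i`, where `γ(V) = √N₂ · max_{i,j} |V i j|`. -/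
theorem stmt3 (N₂ m₁ r : ℕ) (hN₂ : 0 < N₂) (hm₁ : 0 < m₁) (hr : 0 < r)
    (V : Matrix (Fin N₂) (Fin r) ℝ) (S₁ : Matrix (Fin N₂) (Fin m₁) ℝ)
    (hV : Vᵀ * V = 1)
    (f : Fin m₁ → Fin N₂) (hf : Function.Injective f)
    (hS₁ : ∀ (j : Fin N₂) (i : Fin m₁), S₁ j i = if f i = j then 1 else 0)
    (hσ : ∀ σ : ℝ, 0 ≤ σ →
        Module.End.HasEigenvalue (Vᵀ * S₁ * S₁ᵀ * V).mulVecLin (σ ^ 2) →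
        (m₁ : ℝ) / (2 * N₂) ≤ σ ^ 2 ∧ σ ^ 2 ≤ 3 * m₁ / (2 * N₂))
    (γ : ℝ) (hγ : γ = Real.sqrt N₂ * (⨆ i : Fin N₂, ⨆ j : Fin r, |V i j|))
    (P : Matrix (Fin m₁) (Fin m₁) ℝ)
    (hP : P = S₁ᵀ * V * (Vᵀ * S₁ * S₁ᵀ * V)⁻¹ * Vᵀ * S₁) :
    ∀ i : Fin m₁, ∑ j : Fin m₁, (P j i) ^ 2 ≤ 6 * γ ^ 2 * r / m₁ := by
  have hN0 : (N₂ : ℝ) ≠ 0 := Nat.cast_ne_zero.mpr hN₂.ne'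
  have hm0 : (m₁ : ℝ) ≠ 0 := Nat.cast_ne_zero.mpr hm₁.ne'
  have hmpos : (0:ℝ) < m₁ := by exact_mod_cast hm₁
  set A : Matrix (Fin m₁) (Fin r) ℝ := S₁ᵀ * V with hA
  set M : Matrix (Fin r) (Fin r) ℝ := Vᵀ * S₁ * S₁ᵀ * V with hM
  have hMA : M = Aᵀ * A := by
    rw [hA, hM, transpose_mul, transpose_transpose, Matrix.mul_assoc]
  have hpsd : M.PosSemidef := by
    have := posSemidef_conjTranspose_mul_self A
    rwa [conjTranspose_eq_transpose_of_trivial, ← hMA] at this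
  have hherm : M.IsHermitian := hpsd.isHermitian
  have hMT : Mᵀ = M := by
    have := hherm.eq
    rwa [conjTranspose_eq_transpose_of_trivial] at this
  set c : ℝ := (m₁ : ℝ) / (2 * N₂) with hc
  have hcpos : 0 < c := by positivity
  have heig : ∀ i, c ≤ hherm.eigenvalues i := by
    intro i
    have hnn : 0 ≤ hherm.eigenvalues i := hpsd.eigenvalues_nonneg i
    have hev : Module.End.HasEigenvalue M.mulVecLin (hherm.eigenvalues i) := by
      apply Module.End.hasEigenvalue_of_hasEigenvector (x := ⇑(hherm.eigenvectorBasis i))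
      constructor
      · rw [Module.End.mem_eigenspace_iff]
        have := hherm.mulVec_eigenvectorBasis i
        simpa [Matrix.mulVecLin] using this
      · intro h0
        have h1 := hherm.eigenvectorBasis.orthonormal.1 i
        rw [show (hherm.eigenvectorBasis i : EuclideanSpace ℝ (Fin r)) = 0 from by simpa using h0] at h1
        simp at h1
    have h2 := (hσ (Real.sqrt (hherm.eigenvalues i)) (Real.sqrt_nonneg _) (by
      rwa [Real.sq_sqrt hnn])).1
    rwa [Real.sq_sqrt hnn] at h2
  have hdet : IsUnit M.det := by
    rw [hherm.det_eq_prod_eigenvalues]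
    apply IsUnit.mk0
    apply ne_of_gt
    apply Finset.prod_pos
    intro i _
    exact_mod_cast lt_of_lt_of_le hcpos (heig i)
  have hMMinv : M * M⁻¹ = 1 := mul_nonsing_inv M hdet
  intro i
  set e : Fin m₁ → ℝ := Pi.single i 1 with he
  set x : Fin r → ℝ := Aᵀ *ᵥ e with hx
  set y : Fin r → ℝ := M⁻¹ *ᵥ x with hy
  set u : Fin m₁ → ℝ := A *ᵥ y with hu
  have hP' : P = A * M⁻¹ * Aᵀ := by
    rw [hP, hA, transpose_mul, transpose_transpose, Matrix.mul_assoc]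
  have hPe : ∀ j, P j i = u j := by
    intro j
    have h3 : P *ᵥ e = u := by
      rw [hP', hu, hy, hx, ← mulVec_mulVec, ← mulVec_mulVec]
    have h4 := congrFun h3 j
    rw [← h4]
    simp [mulVec, dotProduct, he, Pi.single_apply, mul_ite]
  have hgoal1 : ∑ j : Fin m₁, (P j i)^2 = u ⬝ᵥ u := by
    simp only [hPe]
    simp [dotProduct, pow_two]
  have hMy : M *ᵥ y = x := by
    rw [hy, mulVec_mulVec, hMMinv, one_mulVec]
  have huu : u ⬝ᵥ u = x ⬝ᵥ y := by
    rw [hu, dotProduct_mulVec, ← mulVec_transpose, mulVec_mulVec, ← hMA, hMy]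
  have hquad : c * (y ⬝ᵥ y) ≤ y ⬝ᵥ x := by
    have := quad_lower_aux hherm c heig y
    rwa [hMy] at this
  have hydx : y ⬝ᵥ x = x ⬝ᵥ y := dotProduct_comm y x
  have hs_nonneg : 0 ≤ x ⬝ᵥ y := by
    rw [← huu]; exact Finset.sum_nonneg fun j _ => mul_self_nonneg _
  have hxx_nonneg : 0 ≤ x ⬝ᵥ x := Finset.sum_nonneg fun k _ => mul_self_nonneg _
  have hCS : (x ⬝ᵥ y)^2 ≤ (x ⬝ᵥ x) * (y ⬝ᵥ y) := by
    have := Finset.sum_mul_sq_le_sq_mul_sq Finset.univ x y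
    simpa [dotProduct, pow_two] using this
  have hxk : ∀ k, x k = V (f i) k := by
    intro k
    have h5 : x k = A i k := by
      simp [hx, mulVec, dotProduct, he, Pi.single_apply, transpose_apply, mul_ite]
    rw [h5, hA, mul_apply]
    simp only [transpose_apply, hS₁]
    simp
  have hVbound : ∀ j k, (V j k)^2 ≤ γ^2 / N₂ := by
    intro j k
    have hsup0 : ∀ (a : Fin N₂), |V a k| ≤ ⨆ i' : Fin N₂, ⨆ j' : Fin r, |V i' j'| := by
      intro a
      calc |V a k| ≤ ⨆ j' : Fin r, |V a j'| :=
            le_ciSup (f := fun j' : Fin r => |V a j'|)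
              (Set.Finite.bddAbove (Set.finite_range _)) k
        _ ≤ ⨆ i' : Fin N₂, ⨆ j' : Fin r, |V i' j'| :=
            le_ciSup (f := fun i' : Fin N₂ => ⨆ j' : Fin r, |V i' j'|)
              (Set.Finite.bddAbove (Set.finite_range _)) a
    set s := ⨆ i' : Fin N₂, ⨆ j' : Fin r, |V i' j'| with hsdef
    have hγ2 : γ^2 = N₂ * s^2 := by
      rw [hγ, mul_pow, Real.sq_sqrt (Nat.cast_nonneg N₂)]
    rw [hγ2]
    have h6 : (V j k)^2 ≤ s^2 := by
      rw [← sq_abs]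
      exact pow_le_pow_left₀ (abs_nonneg _) (hsup0 j) 2
    calc (V j k)^2 ≤ s^2 := h6
      _ = (N₂ : ℝ) * s^2 / N₂ := by field_simp
  have hxx : x ⬝ᵥ x ≤ r * (γ^2 / N₂) := by
    rw [dotProduct]
    calc ∑ k, x k * x k = ∑ k, (V (f i) k)^2 := by
          exact Finset.sum_congr rfl fun k _ => by rw [hxk k, pow_two]
      _ ≤ ∑ _k : Fin r, γ^2 / N₂ := Finset.sum_le_sum fun k _ => hVbound (f i) k
      _ = r * (γ^2 / N₂) := by simp [Finset.sum_const, nsmul_eq_mul]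
  rw [hgoal1, huu]
  have hγ2nn : 0 ≤ γ^2 := sq_nonneg γ
  rcases eq_or_lt_of_le hs_nonneg with hs0 | hspos
  · rw [← hs0]; positivity
  · have hyy : y ⬝ᵥ y ≤ (x ⬝ᵥ y) / c := by
      rw [le_div_iff₀ hcpos]
      calc y ⬝ᵥ y * c = c * (y ⬝ᵥ y) := by ring
        _ ≤ y ⬝ᵥ x := hquad
        _ = x ⬝ᵥ y := hydx
    have hs2 : (x ⬝ᵥ y)^2 ≤ (x ⬝ᵥ x) * ((x ⬝ᵥ y) / c) :=
      le_trans hCS (mul_le_mul_of_nonneg_left hyy hxx_nonneg)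
    have hsle : x ⬝ᵥ y ≤ (x ⬝ᵥ x) / c := by
      rw [le_div_iff₀ hcpos]
      have h7 : (x ⬝ᵥ y)^2 * c ≤ (x ⬝ᵥ x) * (x ⬝ᵥ y) := by
        calc (x ⬝ᵥ y)^2 * c ≤ ((x ⬝ᵥ x) * ((x ⬝ᵥ y) / c)) * c :=
              mul_le_mul_of_nonneg_right hs2 hcpos.le
          _ = (x ⬝ᵥ x) * (x ⬝ᵥ y) := by field_simp
      nlinarith [hspos]
    calc x ⬝ᵥ y ≤ (x ⬝ᵥ x) / c := hsle
      _ ≤ (r * (γ^2 / N₂)) / c := by gcongr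
      _ = 2 * γ^2 * r / m₁ := by
          rw [hc]; field_simp
      _ ≤ 6 * γ^2 * r / m₁ := by
          rw [div_le_div_iff₀ hmpos hmpos]
          nlinarith [mul_nonneg (mul_nonneg (sq_nonneg γ) (Nat.cast_nonneg r : (0:ℝ) ≤ (r:ℝ))) hmpos.le]
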